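/- In the square grid with a periodic configuration c (periodic of period n in both coordinate directions): let u be a cell whose four neighbors are all inactive in c, suppose u is not stable for c under rule 34, and suppose the connected component G[0,u] of inactive cells containing u is a finite tree. Rooting this tree at u, let d1 ≥ d2 ≥ d3 ≥ d4 be the depths of the four subtrees consisting of the descendants of the four neighbors of u. Then u is stable for c under rule 3 if and only if d1 = d2. -/

import Mathlib

/-!
While `u` is inactive, rule 3 peels the finite tree `G[0,u]` from its leaves: a cell `w ≠ u` of
the tree becomes active exactly at time `h w + 1`, where `h w` is the depth of its subtree. Since
the grid is bipartite, every inactive neighbour of `w` is its parent or one of its children; the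
neighbours outside the tree are active from the start, the parent is still inactive, and a child of
height `h w - 1` fires only at time `h w`, so `w` first sees three active neighbours at time `h w`.
Hence at time `t` the neighbour `uᵢ` of `u` is active iff `dᵢ < t`, and `u` sees exactly three
active neighbours at some time iff `d2 < t ≤ d1` for some `t`, that is, iff `d2 < d1`.
-/

/-- The von Neumann neighborhood of a cell of the square grid. -/
def sqNbrs (p : ℤ × ℤ) : Finset (ℤ × ℤ) :=
  {(p.1 + 1, p.2), (p.1 - 1, p.2), (p.1, p.2 + 1), (p.1, p.2 - 1)}

/-- Number of active neighbors of `p` in configuration `c`. -/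
def sqActCount (c : ℤ × ℤ → Bool) (p : ℤ × ℤ) : ℕ :=
  ((sqNbrs p).filter (fun q => c q = true)).card

/-- The freezing totalistic rule on the square grid with activating set `I`:
active cells stay active, an inactive cell becomes active iff its number of
active neighbors lies in `I`. -/
def ruleS (I : Finset ℕ) (c : ℤ × ℤ → Bool) : ℤ × ℤ → Bool :=
  fun p => c p || decide (sqActCount c p ∈ I)

/-- A cell `u` is stable for `c` under `F` if it is inactive and remains
inactive at all times. -/
def isStable (F : (ℤ × ℤ → Bool) → (ℤ × ℤ → Bool)) (c : ℤ × ℤ → Bool)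
    (u : ℤ × ℤ) : Prop :=
  c u = false ∧ ∀ t : ℕ, F^[t] c u = false

/-- A configuration is periodic of period `n` in both coordinate directions. -/
def Periodic (n : ℕ) (c : ℤ × ℤ → Bool) : Prop :=
  ∀ p : ℤ × ℤ, c (p.1 + n, p.2) = c p ∧ c (p.1, p.2 + n) = c p

/-- The graph `G[0]` on the inactive cells of `c`, with von Neumann adjacency. -/
def sqG0 (c : ℤ × ℤ → Bool) : SimpleGraph (ℤ × ℤ) where
  Adj p q := p ≠ q ∧ c p = false ∧ c q = false ∧ (q ∈ sqNbrs p ∨ p ∈ sqNbrs q)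
  symm := ⟨fun p q h => ⟨h.1.symm, h.2.2.1, h.2.1, h.2.2.2.symm⟩⟩
  loopless := ⟨fun p h => h.1 rfl⟩

/-- In the tree `G[0,u]` rooted at `u`, the depth of the subtree of
descendants of the neighbor `v` of `u`. -/
def subtreeDepth (c : ℤ × ℤ → Bool) (u v : ℤ × ℤ) (d : ℕ) : Prop :=
  (∀ w, (sqG0 c).Reachable u w →
      (sqG0 c).dist u w = (sqG0 c).dist v w + 1 → (sqG0 c).dist v w ≤ d) ∧
  (∃ w, (sqG0 c).Reachable u w ∧
      (sqG0 c).dist u w = (sqG0 c).dist v w + 1 ∧ (sqG0 c).dist v w = d)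

namespace SimpleGraph

variable {V : Type*} {G : SimpleGraph V} {u v w x : V}

theorem Coloring.dist_ne_of_adj (C : G.Coloring Bool) (hv : G.Reachable u v) (h : G.Adj v w) :
    G.dist u v ≠ G.dist u w := by
  obtain ⟨p, hp⟩ := hv.exists_walk_length_eq_dist
  obtain ⟨q, hq⟩ := (hv.trans h.reachable).exists_walk_length_eq_dist
  intro heq
  have hpq : (C u = true ↔ C v = true) ↔ (C u = true ↔ C w = true) := by
    rw [← C.even_length_iff_congr p, ← C.even_length_iff_congr q, hp, hq, heq]
  have hvw := C.valid h
  revert hpq hvw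
  cases C u <;> cases C v <;> cases C w <;> decide

theorem Reachable.exists_adj_dist_eq_add_one (hr : G.Reachable v x) (hne : v ≠ x) :
    ∃ q, G.Adj v q ∧ G.dist v x = G.dist q x + 1 := by
  obtain ⟨p, hp⟩ := hr.exists_walk_length_eq_dist
  have hnil : ¬p.Nil := Walk.not_nil_of_ne hne
  have hadj := p.adj_snd hnil
  refine ⟨p.snd, hadj, le_antisymm ?_ ?_⟩
  · have := hadj.reachable.dist_triangle_left x
    rw [dist_eq_one_iff_adj.2 hadj] at this
    omega
  · have := G.dist_le p.tail
    have := p.length_tail_add_one hnil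
    omega

theorem Reachable.exists_adj_dist_add_one_eq (hw : G.Reachable u w) (hwu : w ≠ u) :
    ∃ p, G.Adj w p ∧ G.dist u p + 1 = G.dist u w := by
  obtain ⟨p, hp, hd⟩ := hw.symm.exists_adj_dist_eq_add_one hwu
  exact ⟨p, hp, by rw [dist_comm, dist_comm (v := w), hd]⟩

theorem Walk.IsPath.eq_of_forall_not_isCycle
    (hacyc : ∀ w, G.Reachable u w → ∀ c : G.Walk w w, ¬c.IsCycle)
    {p q : G.Walk u v} (hp : p.IsPath) (hq : q.IsPath) : p = q := by
  classical
  by_contra hne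
  obtain ⟨x, hx, -, c, hc, -⟩ := hp.exists_isCycle_sublist_of_ne hq hne
  exact hacyc x ⟨p.takeUntil x hx⟩ c hc

theorem eq_of_adj_of_dist_add_one_eq
    (hacyc : ∀ w, G.Reachable u w → ∀ c : G.Walk w w, ¬c.IsCycle) {p₁ p₂ : V}
    (h₁ : G.Adj w p₁) (h₂ : G.Adj w p₂)
    (hd₁ : G.dist u p₁ + 1 = G.dist u w) (hd₂ : G.dist u p₂ + 1 = G.dist u w) : p₁ = p₂ := by
  classical
  have geodesic : ∀ {p}, G.Adj w p → G.dist u p + 1 = G.dist u w →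
      ∃ P : G.Walk u w, P.IsPath ∧ P.penultimate = p := by
    intro p h hd
    have hr : G.Reachable u p :=
      (Reachable.of_dist_ne_zero (by omega : G.dist u w ≠ 0)).trans h.reachable
    obtain ⟨P, hP, hlen⟩ := hr.exists_path_of_dist
    have hw : w ∉ P.support := fun hw => by
      have := G.dist_le (P.takeUntil w hw)
      have := P.length_takeUntil_le_length hw
      omega
    exact ⟨P.concat h.symm, hP.concat hw h.symm, P.penultimate_concat h.symm⟩
  obtain ⟨P₁, hP₁, rfl⟩ := geodesic h₁ hd₁
  obtain ⟨P₂, hP₂, rfl⟩ := geodesic h₂ hd₂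
  rw [hP₁.eq_of_forall_not_isCycle hacyc hP₂]

/-- When `s` contains the component of `u`, this is the depth of the subtree below `w` of the
tree of geodesics from `u`: `x` lies below `w` when `w` is on a geodesic from `u` to `x`. -/
noncomputable def subtreeHeight (G : SimpleGraph V) (u : V) (s : Finset V) (w : V) : ℕ :=
  (s.filter fun x => G.dist u x = G.dist u w + G.dist w x).sup (G.dist w)

variable {s : Finset V}

theorem dist_le_subtreeHeight (hs : ∀ x, G.Reachable u x ↔ x ∈ s) (hx : G.Reachable u x)
    (hdx : G.dist u x = G.dist u w + G.dist w x) : G.dist w x ≤ G.subtreeHeight u s w :=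
  Finset.le_sup (Finset.mem_filter.2 ⟨(hs x).1 hx, hdx⟩)

theorem exists_dist_eq_subtreeHeight (hs : ∀ x, G.Reachable u x ↔ x ∈ s)
    (hw : G.Reachable u w) :
    ∃ x, G.Reachable u x ∧ G.dist u x = G.dist u w + G.dist w x ∧
      G.dist w x = G.subtreeHeight u s w := by
  obtain ⟨x, hx, hxe⟩ :=
    (s.filter fun x => G.dist u x = G.dist u w + G.dist w x).exists_mem_eq_sup
      ⟨w, Finset.mem_filter.2 ⟨(hs w).1 hw, by simp⟩⟩ (G.dist w)
  rw [Finset.mem_filter] at hx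
  exact ⟨x, (hs x).2 hx.1, hx.2, hxe.symm⟩

theorem subtreeHeight_eq_of_isGreatest (hs : ∀ x, G.Reachable u x ↔ x ∈ s) {d : ℕ}
    (hle : ∀ x, G.Reachable u x → G.dist u x = G.dist u w + G.dist w x → G.dist w x ≤ d)
    (hwit : ∃ x, G.Reachable u x ∧ G.dist u x = G.dist u w + G.dist w x ∧ G.dist w x = d) :
    G.subtreeHeight u s w = d := by
  obtain ⟨x, hx, hdx, rfl⟩ := hwit
  refine le_antisymm (Finset.sup_le fun y hy => ?_) (dist_le_subtreeHeight hs hx hdx)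
  rw [Finset.mem_filter] at hy
  exact hle y ((hs y).2 hy.1) hy.2

theorem subtreeHeight_lt_of_adj (hs : ∀ x, G.Reachable u x ↔ x ∈ s) {q : V}
    (hw : G.Reachable u w) (hq : G.Adj w q) (hdq : G.dist u q = G.dist u w + 1) :
    G.subtreeHeight u s q < G.subtreeHeight u s w := by
  obtain ⟨x, hx, hdx, hxq⟩ := exists_dist_eq_subtreeHeight hs (hw.trans hq.reachable)
  have hwx := hq.reachable.dist_triangle_left x
  have hux := hw.dist_triangle_left x
  rw [dist_eq_one_iff_adj.2 hq] at hwx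
  have := dist_le_subtreeHeight hs hx (w := w) (by omega)
  omega

theorem exists_adj_subtreeHeight_eq_add_one (hs : ∀ x, G.Reachable u x ↔ x ∈ s)
    (hw : G.Reachable u w) (hpos : 0 < G.subtreeHeight u s w) :
    ∃ q, G.Adj w q ∧ G.dist u q = G.dist u w + 1 ∧
      G.subtreeHeight u s w = G.subtreeHeight u s q + 1 := by
  obtain ⟨x, hx, hdx, hxw⟩ := exists_dist_eq_subtreeHeight hs hw
  have hwx : w ≠ x := by
    rintro rfl
    simp at hxw
    omega
  obtain ⟨q, hq, hqx⟩ := (hw.symm.trans hx).exists_adj_dist_eq_add_one hwx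
  have huq := hw.dist_triangle_left q
  have hux := (hw.trans hq.reachable).dist_triangle_left x
  rw [dist_eq_one_iff_adj.2 hq] at huq
  have hdq : G.dist u q = G.dist u w + 1 := by omega
  have := dist_le_subtreeHeight hs hx (w := q) (by omega)
  have := subtreeHeight_lt_of_adj hs hw hq hdq
  exact ⟨q, hq, hdq, by omega⟩

end SimpleGraph

open SimpleGraph

theorem mem_sqNbrs {p q : ℤ × ℤ} :
    q ∈ sqNbrs p ↔
      q = (p.1 + 1, p.2) ∨ q = (p.1 - 1, p.2) ∨ q = (p.1, p.2 + 1) ∨ q = (p.1, p.2 - 1) := by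
  simp [sqNbrs]

theorem mem_sqNbrs_comm {p q : ℤ × ℤ} : q ∈ sqNbrs p ↔ p ∈ sqNbrs q := by
  simp only [mem_sqNbrs, Prod.ext_iff]
  constructor <;> intro h <;> omega

theorem ne_of_mem_sqNbrs {p q : ℤ × ℤ} (h : q ∈ sqNbrs p) : q ≠ p := by
  simp only [mem_sqNbrs, Prod.ext_iff] at h
  rw [Ne, Prod.ext_iff]
  omega

theorem card_sqNbrs (p : ℤ × ℤ) : (sqNbrs p).card = 4 := by
  rw [sqNbrs, Finset.card_insert_of_notMem, Finset.card_insert_of_notMem,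
    Finset.card_insert_of_notMem, Finset.card_singleton] <;>
    simp [Prod.ext_iff] <;> omega

theorem sqG0_adj_iff {c : ℤ × ℤ → Bool} {p q : ℤ × ℤ} :
    (sqG0 c).Adj p q ↔ c p = false ∧ c q = false ∧ q ∈ sqNbrs p := by
  refine ⟨fun ⟨_, hp, hq, h⟩ => ⟨hp, hq, h.elim id mem_sqNbrs_comm.1⟩,
    fun ⟨hp, hq, h⟩ => ⟨(ne_of_mem_sqNbrs h).symm, hp, hq, Or.inl h⟩⟩

def sqG0Coloring (c : ℤ × ℤ → Bool) : (sqG0 c).Coloring Bool :=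
  Coloring.mk (fun p => decide ((p.1 + p.2) % 2 = 0)) fun h => by
    have h := mem_sqNbrs.1 (sqG0_adj_iff.1 h).2.2
    rw [Prod.ext_iff, Prod.ext_iff, Prod.ext_iff, Prod.ext_iff] at h
    simp only [ne_eq, decide_eq_decide]
    omega

theorem inactive_of_reachable {c : ℤ × ℤ → Bool} {u w : ℤ × ℤ} (hu : c u = false)
    (hw : (sqG0 c).Reachable u w) : c w = false := by
  by_cases hwu : w = u
  · rwa [hwu]
  obtain ⟨p, hp, -⟩ := hw.exists_adj_dist_add_one_eq hwu
  exact (sqG0_adj_iff.1 hp).1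

theorem sqActCount_add_card_inactive (X : ℤ × ℤ → Bool) (p : ℤ × ℤ) :
    sqActCount X p + ((sqNbrs p).filter (X · = false)).card = 4 := by
  rw [sqActCount, ← card_sqNbrs p]
  simpa using Finset.card_filter_add_card_filter_not (s := sqNbrs p) (X · = true)

theorem sqActCount_eq_three {X : ℤ × ℤ → Bool} {p a : ℤ × ℤ} (ha : a ∈ sqNbrs p)
    (hXa : X a = false) (hX : ∀ q ∈ sqNbrs p, q ≠ a → X q = true) : sqActCount X p = 3 := by
  have hinactive : (sqNbrs p).filter (X · = false) = {a} := by
    ext q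
    simp only [Finset.mem_filter, Finset.mem_singleton]
    refine ⟨fun ⟨hq, hXq⟩ => by_contra fun hqa => by simp [hX q hq hqa] at hXq, ?_⟩
    rintro rfl
    exact ⟨ha, hXa⟩
  have := sqActCount_add_card_inactive X p
  rw [hinactive, Finset.card_singleton] at this
  omega

theorem sqActCount_le_two {X : ℤ × ℤ → Bool} {p a b : ℤ × ℤ} (ha : a ∈ sqNbrs p)
    (hb : b ∈ sqNbrs p) (hab : a ≠ b) (hXa : X a = false) (hXb : X b = false) :
    sqActCount X p ≤ 2 := by
  have hsub : {a, b} ⊆ (sqNbrs p).filter (X · = false) := by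
    simp [Finset.insert_subset_iff, ha, hb, hXa, hXb]
  have := Finset.card_le_card hsub
  rw [Finset.card_pair hab] at this
  have := sqActCount_add_card_inactive X p
  omega

theorem sqActCount_eq_four {X : ℤ × ℤ → Bool} {p : ℤ × ℤ}
    (hX : ∀ q ∈ sqNbrs p, X q = true) : sqActCount X p = 4 := by
  rw [sqActCount, Finset.filter_true_of_mem hX, card_sqNbrs]

theorem ruleS_apply_eq_true {I : Finset ℕ} {X : ℤ × ℤ → Bool} {p : ℤ × ℤ} :
    ruleS I X p = true ↔ X p = true ∨ sqActCount X p ∈ I := by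
  simp [ruleS]

theorem sqActCount_eq_three_iff_of_sqNbrs_eq {X : ℤ × ℤ → Bool} {u u1 u2 u3 u4 : ℤ × ℤ}
    (hnbrs : sqNbrs u = {u1, u2, u3, u4}) (h12 : u1 ≠ u2) {t d1 d2 d3 d4 : ℕ}
    (hX1 : X u1 = true ↔ d1 < t) (hX2 : X u2 = true ↔ d2 < t)
    (hX3 : X u3 = true ↔ d3 < t) (hX4 : X u4 = true ↔ d4 < t)
    (h21 : d2 ≤ d1) (h32 : d3 ≤ d2) (h43 : d4 ≤ d3) :
    sqActCount X u = 3 ↔ d2 < t ∧ t ≤ d1 := by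
  have hmem : ∀ q ∈ sqNbrs u, q = u1 ∨ q = u2 ∨ q = u3 ∨ q = u4 := by simp [hnbrs]
  have hmem1 : u1 ∈ sqNbrs u := by simp [hnbrs]
  have hmem2 : u2 ∈ sqNbrs u := by simp [hnbrs]
  by_cases ht2 : t ≤ d2
  · have := sqActCount_le_two hmem1 hmem2 h12
      (Bool.eq_false_iff.2 fun h => by have := hX1.1 h; omega)
      (Bool.eq_false_iff.2 fun h => by have := hX2.1 h; omega)
    exact iff_of_false (by omega) (by omega)
  by_cases ht1 : d1 < t
  · have := sqActCount_eq_four fun q hq => by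
      rcases hmem q hq with rfl | rfl | rfl | rfl
      exacts [hX1.2 ht1, hX2.2 (by omega), hX3.2 (by omega), hX4.2 (by omega)]
    exact iff_of_false (by omega) (by omega)
  refine iff_of_true (sqActCount_eq_three hmem1
    (Bool.eq_false_iff.2 fun h => ht1 (hX1.1 h)) fun q hq hq1 => ?_) ⟨by omega, by omega⟩
  rcases hmem q hq with rfl | rfl | rfl | rfl
  exacts [absurd rfl hq1, hX2.2 (by omega), hX3.2 (by omega), hX4.2 (by omega)]

section Peeling

variable {c : ℤ × ℤ → Bool} {u : ℤ × ℤ} {s : Finset (ℤ × ℤ)}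

/-- The state of rule 3 at time `t` while the root `u` is still inactive. -/
structure IsPeeled (c : ℤ × ℤ → Bool) (u : ℤ × ℤ) (s : Finset (ℤ × ℤ)) (X : ℤ × ℤ → Bool)
    (t : ℕ) : Prop where
  active_of_active : ∀ p, c p = true → X p = true
  root_inactive : X u = false
  active_iff : ∀ w, (sqG0 c).Reachable u w → w ≠ u →
    (X w = true ↔ (sqG0 c).subtreeHeight u s w < t)

theorem isPeeled_zero (hu : c u = false) : IsPeeled c u s c 0 :=
  ⟨fun _ h => h, hu, fun _ hw _ =>
    iff_of_false (by simp [inactive_of_reachable hu hw]) (by omega)⟩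

theorem eq_or_active_or_child_of_mem_sqNbrs
    (hacyc : ∀ w, (sqG0 c).Reachable u w → ∀ p : (sqG0 c).Walk w w, ¬p.IsCycle)
    {w p q : ℤ × ℤ} (hw : (sqG0 c).Reachable u w) (hp : (sqG0 c).Adj w p)
    (hdp : (sqG0 c).dist u p + 1 = (sqG0 c).dist u w) (hq : q ∈ sqNbrs w) :
    q = p ∨ c q = true ∨
      ((sqG0 c).Adj w q ∧ (sqG0 c).dist u q = (sqG0 c).dist u w + 1) := by
  cases hcq : c q
  · have hwq : (sqG0 c).Adj w q := sqG0_adj_iff.2 ⟨(sqG0_adj_iff.1 hp).1, hcq, hq⟩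
    have hne := (sqG0Coloring c).dist_ne_of_adj hw hwq
    rcases hwq.diff_dist_adj (u := u) with h | h | h
    · exact absurd h.symm hne
    · exact Or.inr (Or.inr ⟨hwq, h⟩)
    · exact Or.inl (eq_of_adj_of_dist_add_one_eq hacyc hwq hp (by omega) hdp)
  · exact Or.inr (Or.inl rfl)

variable {X : ℤ × ℤ → Bool} {t : ℕ}

theorem IsPeeled.inactive_of_le_subtreeHeight (hX : IsPeeled c u s X t)
    (hs : ∀ w, (sqG0 c).Reachable u w ↔ w ∈ s) {w p : ℤ × ℤ} (hw : (sqG0 c).Reachable u w)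
    (hp : (sqG0 c).Adj w p) (hdp : (sqG0 c).dist u p + 1 = (sqG0 c).dist u w)
    (ht : t ≤ (sqG0 c).subtreeHeight u s w) : X p = false := by
  by_cases hpu : p = u
  · exact hpu ▸ hX.root_inactive
  have hrp := hw.trans hp.reachable
  have := subtreeHeight_lt_of_adj hs hrp hp.symm (by omega)
  exact Bool.eq_false_iff.2 fun h => by have := (hX.active_iff p hrp hpu).1 h; omega

theorem IsPeeled.sqActCount_eq_three_of_subtreeHeight_eq (hX : IsPeeled c u s X t)
    (hs : ∀ w, (sqG0 c).Reachable u w ↔ w ∈ s)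
    (hacyc : ∀ w, (sqG0 c).Reachable u w → ∀ p : (sqG0 c).Walk w w, ¬p.IsCycle)
    {w : ℤ × ℤ} (hw : (sqG0 c).Reachable u w) (hwu : w ≠ u)
    (ht : (sqG0 c).subtreeHeight u s w = t) : sqActCount X w = 3 := by
  obtain ⟨p, hp, hdp⟩ := hw.exists_adj_dist_add_one_eq hwu
  refine sqActCount_eq_three (sqG0_adj_iff.1 hp).2.2
    (hX.inactive_of_le_subtreeHeight hs hw hp hdp ht.ge) fun q hq hqp => ?_
  rcases eq_or_active_or_child_of_mem_sqNbrs hacyc hw hp hdp hq with rfl | hcq | ⟨hwq, hdq⟩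
  · exact absurd rfl hqp
  · exact hX.active_of_active q hcq
  · have hqu : q ≠ u := by rintro rfl; simp at hdq
    have := subtreeHeight_lt_of_adj hs hw hwq hdq
    exact (hX.active_iff q (hw.trans hwq.reachable) hqu).2 (by omega)

theorem IsPeeled.sqActCount_le_two_of_lt_subtreeHeight (hX : IsPeeled c u s X t)
    (hs : ∀ w, (sqG0 c).Reachable u w ↔ w ∈ s) {w : ℤ × ℤ} (hw : (sqG0 c).Reachable u w)
    (hwu : w ≠ u) (ht : t < (sqG0 c).subtreeHeight u s w) : sqActCount X w ≤ 2 := by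
  obtain ⟨p, hp, hdp⟩ := hw.exists_adj_dist_add_one_eq hwu
  obtain ⟨q, hq, hdq, hhq⟩ := exists_adj_subtreeHeight_eq_add_one hs hw (by omega)
  have hqu : q ≠ u := by rintro rfl; simp at hdq
  have hpq : p ≠ q := by rintro rfl; omega
  exact sqActCount_le_two (sqG0_adj_iff.1 hp).2.2 (sqG0_adj_iff.1 hq).2.2 hpq
    (hX.inactive_of_le_subtreeHeight hs hw hp hdp ht.le)
    (Bool.eq_false_iff.2 fun h => by
      have := (hX.active_iff q (hw.trans hq.reachable) hqu).1 h; omega)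

theorem IsPeeled.ruleS_three (hX : IsPeeled c u s X t)
    (hs : ∀ w, (sqG0 c).Reachable u w ↔ w ∈ s)
    (hacyc : ∀ w, (sqG0 c).Reachable u w → ∀ p : (sqG0 c).Walk w w, ¬p.IsCycle)
    (hu3 : sqActCount X u ≠ 3) : IsPeeled c u s (ruleS {3} X) (t + 1) where
  active_of_active p hp := ruleS_apply_eq_true.2 (Or.inl (hX.active_of_active p hp))
  root_inactive := by simp [ruleS, hX.root_inactive, hu3]
  active_iff w hw hwu := by
    rw [ruleS_apply_eq_true, hX.active_iff w hw hwu, Finset.mem_singleton]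
    rcases lt_trichotomy ((sqG0 c).subtreeHeight u s w) t with h | h | h
    · exact iff_of_true (Or.inl h) (by omega)
    · exact iff_of_true
        (Or.inr (hX.sqActCount_eq_three_of_subtreeHeight_eq hs hacyc hw hwu h)) (by omega)
    · have := hX.sqActCount_le_two_of_lt_subtreeHeight hs hw hwu h
      exact iff_of_false (by omega) (by omega)

theorem isPeeled_iterate (hu : c u = false) (hs : ∀ w, (sqG0 c).Reachable u w ↔ w ∈ s)
    (hacyc : ∀ w, (sqG0 c).Reachable u w → ∀ p : (sqG0 c).Walk w w, ¬p.IsCycle) {t : ℕ}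
    (hroot : ∀ t' < t, IsPeeled c u s ((ruleS {3})^[t'] c) t' →
      sqActCount ((ruleS {3})^[t'] c) u ≠ 3) :
    IsPeeled c u s ((ruleS {3})^[t] c) t := by
  induction t with
  | zero => exact isPeeled_zero hu
  | succ t ih =>
    have hX := ih fun t' ht' => hroot t' (by omega)
    rw [Function.iterate_succ_apply']
    exact hX.ruleS_three hs hacyc (hroot t (by omega) hX)

theorem IsPeeled.active_iff_of_subtreeDepth (hX : IsPeeled c u s X t) (hu : c u = false)
    (hs : ∀ w, (sqG0 c).Reachable u w ↔ w ∈ s) {v : ℤ × ℤ} {d : ℕ} (hv : v ∈ sqNbrs u)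
    (hcv : c v = false) (hd : subtreeDepth c u v d) : X v = true ↔ d < t := by
  have huv : (sqG0 c).Adj u v := sqG0_adj_iff.2 ⟨hu, hcv, hv⟩
  have hdist : (sqG0 c).dist u v = 1 := dist_eq_one_iff_adj.2 huv
  have hheight : (sqG0 c).subtreeHeight u s v = d := by
    obtain ⟨hle, x, hx, hdx, hxd⟩ := hd
    exact subtreeHeight_eq_of_isGreatest hs (fun y hy hdy => hle y hy (by omega))
      ⟨x, hx, by omega, hxd⟩
  rw [hX.active_iff v huv.reachable huv.ne', hheight]

end Peeling

theorem stmt9_general (c : ℤ × ℤ → Bool)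
    (u u1 u2 u3 u4 : ℤ × ℤ)
    (hnbrs : sqNbrs u = {u1, u2, u3, u4})
    (h12 : u1 ≠ u2)
    (hu : c u = false)
    (hc1 : c u1 = false) (hc2 : c u2 = false) (hc3 : c u3 = false)
    (hc4 : c u4 = false)
    -- the component is finite
    (s : Finset (ℤ × ℤ)) (hs : ∀ w, (sqG0 c).Reachable u w ↔ w ∈ s)
    -- the component is acyclic (hence a tree, being connected by definition)
    (hacyc : ∀ w, (sqG0 c).Reachable u w → ∀ p : (sqG0 c).Walk w w, ¬ p.IsCycle)
    (d1 d2 d3 d4 : ℕ)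
    (hd1 : subtreeDepth c u u1 d1) (hd2 : subtreeDepth c u u2 d2)
    (hd3 : subtreeDepth c u u3 d3) (hd4 : subtreeDepth c u u4 d4)
    (hord21 : d2 ≤ d1) (hord32 : d3 ≤ d2) (hord43 : d4 ≤ d3) :
    isStable (ruleS {3}) c u ↔ d1 = d2 := by
  have hroot : ∀ {X t}, IsPeeled c u s X t → (sqActCount X u = 3 ↔ d2 < t ∧ t ≤ d1) :=
    fun hX => sqActCount_eq_three_iff_of_sqNbrs_eq hnbrs h12
      (hX.active_iff_of_subtreeDepth hu hs (by simp [hnbrs]) hc1 hd1)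
      (hX.active_iff_of_subtreeDepth hu hs (by simp [hnbrs]) hc2 hd2)
      (hX.active_iff_of_subtreeDepth hu hs (by simp [hnbrs]) hc3 hd3)
      (hX.active_iff_of_subtreeDepth hu hs (by simp [hnbrs]) hc4 hd4) hord21 hord32 hord43
  constructor
  · intro hstab
    by_contra hne
    have hX := isPeeled_iterate hu hs hacyc (t := d2 + 1) fun t' ht' hX' h3 => by
      have := (hroot hX').1 h3; omega
    have h3 := (hroot hX).2 ⟨by omega, by omega⟩
    have hfire : (ruleS {3})^[d2 + 1 + 1] c u = true := by
      rw [Function.iterate_succ_apply']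
      exact ruleS_apply_eq_true.2 (Or.inr (Finset.mem_singleton.2 h3))
    simp [hstab.2] at hfire
  · intro heq
    exact ⟨hu, fun t => (isPeeled_iterate hu hs hacyc fun t' _ hX' h3 => by
      have := (hroot hX').1 h3; omega).root_inactive⟩

/-- square grid, `c` periodic of period `n`. Let `u` be an
inactive cell whose four neighbors `u1, u2, u3, u4` are all inactive, suppose
`u` is not stable under rule 34, and suppose the component `G[0,u]` of
inactive cells containing `u` is a finite tree. Rooting the tree at `u`, let
`d1 ≥ d2 ≥ d3 ≥ d4` be the depths of the subtrees of descendants of the four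
neighbors. Then `u` is stable under rule 3 iff `d1 = d2`. -/
theorem stmt9 (n : ℕ) (hn : 0 < n) (c : ℤ × ℤ → Bool)
    (hper : Periodic n c) (u u1 u2 u3 u4 : ℤ × ℤ)
    (hnbrs : sqNbrs u = {u1, u2, u3, u4})
    (h12 : u1 ≠ u2) (h13 : u1 ≠ u3) (h14 : u1 ≠ u4)
    (h23 : u2 ≠ u3) (h24 : u2 ≠ u4) (h34 : u3 ≠ u4)
    (hu : c u = false)
    (hc1 : c u1 = false) (hc2 : c u2 = false) (hc3 : c u3 = false)
    (hc4 : c u4 = false)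
    (hnstab34 : ¬ isStable (ruleS {3, 4}) c u)
    -- the component is finite
    (s : Finset (ℤ × ℤ)) (hs : ∀ w, (sqG0 c).Reachable u w ↔ w ∈ s)
    -- the component is acyclic (hence a tree, being connected by definition)
    (hacyc : ∀ w, (sqG0 c).Reachable u w → ∀ p : (sqG0 c).Walk w w, ¬ p.IsCycle)
    (d1 d2 d3 d4 : ℕ)
    (hd1 : subtreeDepth c u u1 d1) (hd2 : subtreeDepth c u u2 d2)
    (hd3 : subtreeDepth c u u3 d3) (hd4 : subtreeDepth c u u4 d4)
    (hord21 : d2 ≤ d1) (hord32 : d3 ≤ d2) (hord43 : d4 ≤ d3) :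
    isStable (ruleS {3}) c u ↔ d1 = d2 :=
  stmt9_general c u u1 u2 u3 u4 hnbrs h12 hu hc1 hc2 hc3 hc4 s hs hacyc d1 d2 d3 d4 hd1 hd2 hd3 hd4
    hord21 hord32 hord43
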